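/- Let n ≥ 1 and let J : ℝⁿ × ℝ → ℝ be a measurable kernel satisfying: supp J ⊂ ℝⁿ × [0,∞); J ≥ 0; J ∈ L¹(ℝ^{n+1}) with ∬ J = 1; and J has compact support. Let f ∈ L^∞(ℝⁿ) and let u be the unique bounded continuous solution on ℝⁿ × [0,∞) of u(x,t) = ∬ J(x−y, t−s) ū(y,s) dy ds, where ū = f for s < 0 and ū = u for s ≥ 0. Then u(x,0) = (λ * f)(x) = ∫_{ℝⁿ} λ(x−y) f(y) dy for every x ∈ ℝⁿ, where λ(x) = ∫_ℝ J(x,t) dt is the jump length probability density of J. -/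

import Mathlib

open MeasureTheory Real

/-- **The initial value of the solution is the jump-length mollification of the datum.**
Let `J` be a nonnegative, integrable, compactly supported space-time probability
density on `ℝⁿ × ℝ` supported in `{t ≥ 0}`, let `f` be bounded measurable, and let
`u` be the (unique) bounded continuous solution of `u = J ∗ ū` with past data `f`.
Then `u(x,0) = (λ ∗ f)(x) = ∫ λ(x−y) f(y) dy`, where `λ(x) = ∫ J(x,t) dt` is the
jump length probability density of `J`. -/
theorem ctrw_cauchy_problem_initial_value
    (n : ℕ) (hn : 1 ≤ n)
    (J : EuclideanSpace ℝ (Fin n) × ℝ → ℝ)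
    (hJsupp : ∀ p : EuclideanSpace ℝ (Fin n) × ℝ, p.2 < 0 → J p = 0)
    (hJnonneg : ∀ p, 0 ≤ J p)
    (hJmeas : Measurable J)
    (hJint : Integrable J)
    (hJone : ∫ p : EuclideanSpace ℝ (Fin n) × ℝ, J p = 1)
    (hJcpt : HasCompactSupport J)
    (f : EuclideanSpace ℝ (Fin n) → ℝ)
    (hfmeas : Measurable f)
    (hfbdd : ∃ M : ℝ, ∀ x, |f x| ≤ M)
    (u : EuclideanSpace ℝ (Fin n) × ℝ → ℝ)
    (hu_past : ∀ (y : EuclideanSpace ℝ (Fin n)) (s : ℝ), s < 0 → u (y, s) = f y)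
    (hu_cont : ContinuousOn u {p : EuclideanSpace ℝ (Fin n) × ℝ | 0 ≤ p.2})
    (hu_bdd : ∃ M : ℝ, ∀ p : EuclideanSpace ℝ (Fin n) × ℝ, 0 ≤ p.2 → |u p| ≤ M)
    (hu_eq : ∀ (x : EuclideanSpace ℝ (Fin n)) (t : ℝ), 0 ≤ t →
      u (x, t) = ∫ q : EuclideanSpace ℝ (Fin n) × ℝ, J (x - q.1, t - q.2) * u q) :
    ∀ x : EuclideanSpace ℝ (Fin n),
      u (x, 0) = ∫ y : EuclideanSpace ℝ (Fin n), (∫ t : ℝ, J (x - y, t)) * f y := by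
  intro x
  obtain ⟨M, hM⟩ := hfbdd
  -- the map q ↦ (x - q.1, -q.2) is measure preserving
  have hT : MeasurePreserving
      (fun q : EuclideanSpace ℝ (Fin n) × ℝ => ((x - q.1, -q.2) :
        EuclideanSpace ℝ (Fin n) × ℝ))
      (volume : Measure (EuclideanSpace ℝ (Fin n) × ℝ)) volume := by
    rw [Measure.volume_eq_prod]
    exact (Measure.measurePreserving_sub_left volume x).prod (Measure.measurePreserving_neg volume)
  have hJT : Integrable (fun q : EuclideanSpace ℝ (Fin n) × ℝ => J (x - q.1, -q.2)) :=
    (hT.integrable_comp hJint.aestronglyMeasurable).mpr hJint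
  -- integrability of the product with f
  have hint : Integrable
      (fun q : EuclideanSpace ℝ (Fin n) × ℝ => J (x - q.1, -q.2) * f q.1) := by
    have := hJT.bdd_mul (c := M) ((hfmeas.comp measurable_fst).aestronglyMeasurable)
      (Filter.Eventually.of_forall fun q => by simpa [Real.norm_eq_abs] using hM q.1)
    simpa [mul_comm] using this
  -- the hyperplane {q.2 = 0} is null
  have hnull : (volume : Measure (EuclideanSpace ℝ (Fin n) × ℝ))
      {q : EuclideanSpace ℝ (Fin n) × ℝ | q.2 = 0} = 0 := by
    have hset : {q : EuclideanSpace ℝ (Fin n) × ℝ | q.2 = 0}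
        = (Set.univ : Set (EuclideanSpace ℝ (Fin n))) ×ˢ ({0} : Set ℝ) := by
      ext ⟨y, s⟩; simp [eq_comm]
    rw [Measure.volume_eq_prod, hset, Measure.prod_prod]
    simp
  have h0 : ∀ᵐ q : EuclideanSpace ℝ (Fin n) × ℝ, q.2 ≠ 0 := by
    rw [ae_iff]
    simpa using hnull
  -- a.e. equality of the integrands
  have hae : (fun q : EuclideanSpace ℝ (Fin n) × ℝ => J (x - q.1, -q.2) * u q)
      =ᵐ[volume] (fun q => J (x - q.1, -q.2) * f q.1) := by
    filter_upwards [h0] with q hq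
    rcases lt_or_gt_of_ne hq with h | h
    · have : u q = f q.1 := by
        have := hu_past q.1 q.2 h
        simpa using this
      rw [this]
    · have : J (x - q.1, -q.2) = 0 := hJsupp _ (by simpa using h)
      rw [this, zero_mul, zero_mul]
  calc u (x, 0)
      = ∫ q : EuclideanSpace ℝ (Fin n) × ℝ, J (x - q.1, 0 - q.2) * u q :=
        hu_eq x 0 le_rfl
    _ = ∫ q : EuclideanSpace ℝ (Fin n) × ℝ, J (x - q.1, -q.2) * u q := by
        simp [zero_sub]
    _ = ∫ q : EuclideanSpace ℝ (Fin n) × ℝ, J (x - q.1, -q.2) * f q.1 :=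
        integral_congr_ae hae
    _ = ∫ y : EuclideanSpace ℝ (Fin n), ∫ s : ℝ, J (x - y, -s) * f y := by
        rw [Measure.volume_eq_prod] at hint ⊢
        exact MeasureTheory.integral_prod _ hint
    _ = ∫ y : EuclideanSpace ℝ (Fin n), (∫ t : ℝ, J (x - y, t)) * f y := by
        refine integral_congr_ae (Filter.Eventually.of_forall fun y => ?_)
        simp only
        rw [integral_mul_const]
        congr 1
        exact (Measure.measurePreserving_neg (volume : Measure ℝ)).integral_comp
          (Homeomorph.neg ℝ).isClosedEmbedding.measurableEmbedding (fun t => J (x - y, t))
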